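/- arXiv:1109.0842 — 9 statements merged into one kernel-verified Lean document; each statement's English description precedes it below -/
import Mathlib

section
/- Let X be a type (of thermal equilibrium states), let S, K : X → ℝ, and let scale : ℝ → X → X be a scaling operation. Assume: (i) extensive scaling, i.e. for every λ > 0 and every x ∈ X, S(scale λ x) = λ²·S(x) and K(scale λ x) = λ²·K(x); (ii) the joint entropy principle, i.e. for every n ∈ ℕ and all families x, y : Fin n → X one has ∑ᵢ S(xᵢ) ≤ ∑ᵢ S(yᵢ) if and only if ∑ᵢ K(xᵢ) ≤ ∑ᵢ K(yᵢ); (iii) there exist x₁, x₂ ∈ X with S(x₁) < S(x₂). Then there exist a constant α > 0 and a constant η ∈ ℝ such that K(x) = α·S(x) + η for every x ∈ X. -/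
/-- Uniqueness of Bekenstein-Hawking entropy: any state variable `K` satisfying
extensivity (scaling as `λ²` under the fundamental length scaling), and the joint
entropy principle with `S` for composite systems, is an affine transform of `S`. -/
theorem bh_entropy_uniqueness {X : Type*} (S K : X → ℝ) (scale : ℝ → X → X)
    (hSscale : ∀ l : ℝ, 0 < l → ∀ x : X, S (scale l x) = l ^ 2 * S x)
    (hKscale : ∀ l : ℝ, 0 < l → ∀ x : X, K (scale l x) = l ^ 2 * K x)
    (hEP : ∀ (n : ℕ) (x y : Fin n → X),
      (∑ i, S (x i)) ≤ (∑ i, S (y i)) ↔ (∑ i, K (x i)) ≤ (∑ i, K (y i)))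
    (hex : ∃ x₁ x₂ : X, S x₁ < S x₂) :
    ∃ α : ℝ, 0 < α ∧ ∃ η : ℝ, ∀ x : X, K x = α * S x + η := by
  obtain ⟨x₁, x₂, hx⟩ := hex
  -- scaled versions: for c > 0, S (scale √c z) = c * S z, same for K
  have hS' : ∀ c : ℝ, 0 < c → ∀ z : X, S (scale (Real.sqrt c) z) = c * S z := by
    intro c hc z
    rw [hSscale _ (Real.sqrt_pos.mpr hc), Real.sq_sqrt hc.le]
  have hK' : ∀ c : ℝ, 0 < c → ∀ z : X, K (scale (Real.sqrt c) z) = c * K z := by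
    intro c hc z
    rw [hKscale _ (Real.sqrt_pos.mpr hc), Real.sq_sqrt hc.le]
  have hKlt : K x₁ < K x₂ := by
    by_contra h
    push_neg at h
    have h2 := (hEP 1 ![x₂] ![x₁]).mpr (by simpa using h)
    simp at h2
    linarith
  have hba : 0 < S x₂ - S x₁ := by linarith
  refine ⟨(K x₂ - K x₁) / (S x₂ - S x₁), div_pos (by linarith) hba,
    K x₁ - (K x₂ - K x₁) / (S x₂ - S x₁) * S x₁, ?_⟩
  intro x
  set t : ℝ := (S x - S x₁) / (S x₂ - S x₁) with ht
  have htval : t * (S x₂ - S x₁) = S x - S x₁ := div_mul_cancel₀ _ hba.ne'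
  set c : ℝ := 1 + max 0 (t - 1) with hc
  set c' : ℝ := 1 + max 0 (1 - t) with hc'
  set d : ℝ := 1 + max 0 (-t) with hd
  set d' : ℝ := 1 + max 0 t with hd'
  have hcpos : 0 < c := by positivity
  have hc'pos : 0 < c' / 2 := by positivity
  have hdpos : 0 < d := by positivity
  have hd'pos : 0 < d' := by positivity
  have hcc' : c' - c = 1 - t := by
    rcases le_total t 1 with h | h
    · have e1 : (0:ℝ) ⊔ (t - 1) = 0 := max_eq_left (by linarith)
      have e2 : (0:ℝ) ⊔ (1 - t) = 1 - t := max_eq_right (by linarith)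
      rw [hc, hc', e1, e2]; ring
    · have e1 : (0:ℝ) ⊔ (t - 1) = t - 1 := max_eq_right (by linarith)
      have e2 : (0:ℝ) ⊔ (1 - t) = 0 := max_eq_left (by linarith)
      rw [hc, hc', e1, e2]; ring
  have hdd' : d' - d = t := by
    rcases le_total t 0 with h | h
    · have e1 : (0:ℝ) ⊔ (-t) = -t := max_eq_right (by linarith)
      have e2 : (0:ℝ) ⊔ t = 0 := max_eq_left (by linarith)
      rw [hd, hd', e1, e2]; ring
    · have e1 : (0:ℝ) ⊔ (-t) = 0 := max_eq_left (by linarith)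
      have e2 : (0:ℝ) ⊔ t = t := max_eq_right (by linarith)
      rw [hd, hd', e1, e2]; ring
  -- the key S-equality
  have hSeq : S x + c * S x₁ + d * S x₂ = (c' / 2) * S x₁ + (c' / 2 * S x₁ + d' * S x₂) := by
    have hx' : S x = (1 - t) * S x₁ + t * S x₂ := by linear_combination -htval
    linear_combination hx' - S x₁ * hcc' - S x₂ * hdd'
  -- families
  set L : Fin 3 → X := ![x, scale (Real.sqrt c) x₁, scale (Real.sqrt d) x₂] with hL
  set R : Fin 3 → X := ![scale (Real.sqrt (c'/2)) x₁, scale (Real.sqrt (c'/2)) x₁,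
      scale (Real.sqrt d') x₂] with hR
  have hLS : (∑ i, S (L i)) = S x + c * S x₁ + d * S x₂ := by
    simp only [hL, Fin.sum_univ_three, Matrix.cons_val_zero, Matrix.cons_val_one, Matrix.head_cons,
      Matrix.cons_val_two, Matrix.tail_cons, hS' c hcpos, hS' d hdpos]
  have hRS : (∑ i, S (R i)) = (c' / 2) * S x₁ + (c' / 2 * S x₁ + d' * S x₂) := by
    simp only [hR, Fin.sum_univ_three, Matrix.cons_val_zero, Matrix.cons_val_one, Matrix.head_cons,
      Matrix.cons_val_two, Matrix.tail_cons, hS' _ hc'pos, hS' _ hd'pos]; ring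
  have hLK : (∑ i, K (L i)) = K x + c * K x₁ + d * K x₂ := by
    simp only [hL, Fin.sum_univ_three, Matrix.cons_val_zero, Matrix.cons_val_one, Matrix.head_cons,
      Matrix.cons_val_two, Matrix.tail_cons, hK' c hcpos, hK' d hdpos]
  have hRK : (∑ i, K (R i)) = (c' / 2) * K x₁ + (c' / 2 * K x₁ + d' * K x₂) := by
    simp only [hR, Fin.sum_univ_three, Matrix.cons_val_zero, Matrix.cons_val_one, Matrix.head_cons,
      Matrix.cons_val_two, Matrix.tail_cons, hK' _ hc'pos, hK' _ hd'pos]; ring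
  have h1 : (∑ i, K (L i)) ≤ (∑ i, K (R i)) :=
    (hEP 3 L R).mp (by rw [hLS, hRS, hSeq])
  have h2 : (∑ i, K (R i)) ≤ (∑ i, K (L i)) :=
    (hEP 3 R L).mp (by rw [hLS, hRS, hSeq])
  have hKeq : K x + c * K x₁ + d * K x₂ = (c' / 2) * K x₁ + (c' / 2 * K x₁ + d' * K x₂) := by
    rw [← hLK, ← hRK]; linarith
  -- solve for K x
  have hKx : K x = (1 - t) * K x₁ + t * K x₂ := by
    linear_combination hKeq + K x₁ * hcc' + K x₂ * hdd'
  rw [hKx]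
  have : (K x₂ - K x₁) / (S x₂ - S x₁) * (S x - S x₁) = t * (K x₂ - K x₁) := by
    rw [← htval, ht]
    field_simp
  linarith [this]
end

section
/- For all real M, r with 0 < 2M < r: if t' is the derivative at M of the one-variable function m ↦ T(m,r), then the function m ↦ F(m,r) has derivative −4πM²·t' at M. (This expresses −∂F/∂T_{BH} = 4πM², i.e. the Bekenstein–Hawking entropy S(M) = 4πM² is recovered from the free energy.) -/
open Real

/-- Redshifted Hawking temperature measured at wall radius `r`. -/
noncomputable def Tbh (M r : ℝ) : ℝ := 1 / (8 * π * M * Real.sqrt (1 - 2 * M / r))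

/-- Free energy of the Schwarzschild black hole in a cavity of wall radius `r`. -/
noncomputable def Fbh (M r : ℝ) : ℝ :=
  r * (1 - Real.sqrt (1 - 2 * M / r)) - M / (2 * Real.sqrt (1 - 2 * M / r))

/-- `−∂F/∂T_BH = 4πM²`: the Bekenstein–Hawking entropy `S = 4πM²` is recovered
from the free energy. -/
theorem free_energy_gives_bh_entropy (M r : ℝ) (h0 : 0 < 2 * M) (h1 : 2 * M < r)
    (t' : ℝ) (ht : HasDerivAt (fun m => Tbh m r) t' M) :
    HasDerivAt (fun m => Fbh m r) (-(4 * π * M ^ 2) * t') M := by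
  have hM : 0 < M := by linarith
  have hr : 0 < r := by linarith
  have hx : 0 < 1 - 2 * M / r := by
    have : 2 * M / r < 1 := (div_lt_one hr).2 h1
    linarith
  set s := Real.sqrt (1 - 2 * M / r) with hs_def
  have hs_pos : 0 < s := Real.sqrt_pos.2 hx
  have hs_sq : s ^ 2 = 1 - 2 * M / r := Real.sq_sqrt hx.le
  have hπ := Real.pi_pos
  -- derivative of inner function
  have hinner : HasDerivAt (fun m : ℝ => 1 - 2 * m / r) (-(2 / r)) M := by
    have : HasDerivAt (fun m : ℝ => 2 * m / r) (2 / r) M := by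
      simpa using (((hasDerivAt_id M).const_mul 2).div_const r)
    simpa using this.const_sub 1
  have hsqrt : HasDerivAt (fun m : ℝ => Real.sqrt (1 - 2 * m / r))
      (-(2 / r) / (2 * s)) M := hinner.sqrt (by positivity)
  -- derivative of Tbh
  have hden : HasDerivAt (fun m : ℝ => 8 * π * m * Real.sqrt (1 - 2 * m / r))
      (8 * π * s + (8 * π * M) * (-(2 / r) / (2 * s))) M := by
    have h1' : HasDerivAt (fun m : ℝ => 8 * π * m) (8 * π) M := by
      simpa using (hasDerivAt_id M).const_mul (8 * π)
    exact h1'.mul hsqrt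
  have hdne : 8 * π * M * s ≠ 0 := by positivity
  have hT : HasDerivAt (fun m => Tbh m r)
      ((0 * (8 * π * M * s) - 1 * (8 * π * s + (8 * π * M) * (-(2 / r) / (2 * s)))) /
        (8 * π * M * s) ^ 2) M := by
    unfold Tbh
    exact (hasDerivAt_const M (1 : ℝ)).div hden hdne
  have ht' : t' = (0 * (8 * π * M * s) - 1 * (8 * π * s + (8 * π * M) * (-(2 / r) / (2 * s)))) /
        (8 * π * M * s) ^ 2 := ht.unique hT
  -- derivative of Fbh
  have hF1 : HasDerivAt (fun m : ℝ => r * (1 - Real.sqrt (1 - 2 * m / r)))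
      (r * (0 - (-(2 / r) / (2 * s)))) M := by
    simpa using ((hsqrt.const_sub 1).const_mul r)
  have hs2ne : 2 * s ≠ 0 := by positivity
  have hF2 : HasDerivAt (fun m : ℝ => m / (2 * Real.sqrt (1 - 2 * m / r)))
      ((1 * (2 * s) - M * (2 * (-(2 / r) / (2 * s)))) / (2 * s) ^ 2) M := by
    exact (hasDerivAt_id M).div (hsqrt.const_mul 2) hs2ne
  have hF : HasDerivAt (fun m => Fbh m r)
      (r * (0 - (-(2 / r) / (2 * s))) -
        (1 * (2 * s) - M * (2 * (-(2 / r) / (2 * s)))) / (2 * s) ^ 2) M := by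
    unfold Fbh
    exact hF1.sub hF2
  have heq : r * (0 - (-(2 / r) / (2 * s))) -
        (1 * (2 * s) - M * (2 * (-(2 / r) / (2 * s)))) / (2 * s) ^ 2
      = -(4 * π * M ^ 2) * t' := by
    rw [ht']
    have hrne : r ≠ 0 := hr.ne'
    have hsne : s ≠ 0 := hs_pos.ne'
    have hπne : π ≠ 0 := hπ.ne'
    have hMne : M ≠ 0 := hM.ne'
    field_simp
    nlinarith [hs_sq, sq_nonneg s, sq_nonneg (s*r)]
  rw [← heq]
  exact hF
end

section
/- For all real M, r with 0 < 2M < r and r ≠ 3M: the function m ↦ T(m,r) is differentiable at M with derivative t' ≠ 0, and the heat capacity C_BH := T(M,r)·(8πM)/t' (i.e. T_BH·(dS/dM)/(dT_BH/dM), with dS/dM = 8πM) equals −8πM²·(1−2M/r)/(1−3M/r). In particular C_BH > 0 whenever 2M < r < 3M, and C_BH < 0 whenever r > 3M. -/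
open Real

/-- The heat capacity `C_BH = T_BH·(dS/dM)/(dT_BH/dM)` of the Schwarzschild black hole
equals `−8πM²·(1−2M/r)/(1−3M/r)`; it is positive for `2M < r < 3M` and negative
for `r > 3M`. -/
theorem bh_heat_capacity (M r : ℝ) (h0 : 0 < 2 * M) (h1 : 2 * M < r) (h3 : r ≠ 3 * M) :
    ∃ t' : ℝ, HasDerivAt (fun m => Tbh m r) t' M ∧ t' ≠ 0 ∧
      Tbh M r * (8 * π * M) / t' = -8 * π * M ^ 2 * (1 - 2 * M / r) / (1 - 3 * M / r) ∧
      (r < 3 * M → 0 < Tbh M r * (8 * π * M) / t') ∧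
      (3 * M < r → Tbh M r * (8 * π * M) / t' < 0) := by
  have hr : 0 < r := lt_trans h0 h1
  have hM : 0 < M := by linarith
  have hπ := Real.pi_pos
  have hu : 0 < 1 - 2 * M / r := by
    have : 2 * M / r < 1 := (div_lt_one hr).mpr h1
    linarith
  set s := Real.sqrt (1 - 2 * M / r) with hs_def
  have hs : 0 < s := Real.sqrt_pos.mpr hu
  have hs2 : s ^ 2 = 1 - 2 * M / r := Real.sq_sqrt hu.le
  have hv : s ^ 2 - M / r ≠ 0 := by
    rw [hs2]
    intro h
    apply h3
    field_simp at h
    linarith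
  -- derivative of inner function
  have hinner : HasDerivAt (fun m : ℝ => 1 - 2 * m / r) (-(2 / r)) M := by
    have h2 : HasDerivAt (fun m : ℝ => 2 * m / r) (2 / r) M := by
      simpa using ((hasDerivAt_id M).const_mul 2).div_const r
    simpa [Pi.sub_def] using (hasDerivAt_const M (1:ℝ)).sub h2
  have hsqrt : HasDerivAt (fun m : ℝ => Real.sqrt (1 - 2 * m / r))
      (-(2 / r) / (2 * s)) M := hinner.sqrt hu.ne'
  have hlin : HasDerivAt (fun m : ℝ => 8 * π * m) (8 * π) M := by
    simpa using (hasDerivAt_id M).const_mul (8 * π)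
  have hprod : HasDerivAt (fun m : ℝ => 8 * π * m * Real.sqrt (1 - 2 * m / r))
      (8 * π * s + 8 * π * M * (-(2 / r) / (2 * s))) M := by
    simpa [hs_def, Pi.mul_def] using hlin.mul hsqrt
  have hfne : 8 * π * M * s ≠ 0 := by positivity
  have hinv : HasDerivAt (fun m : ℝ => Tbh m r)
      (-(8 * π * s + 8 * π * M * (-(2 / r) / (2 * s))) / (8 * π * M * s) ^ 2) M := by
    have := hprod.inv (by simpa [hs_def] using hfne)
    simpa [Tbh, one_div, hs_def, Pi.inv_def] using this
  set t' : ℝ := -(8 * π * s + 8 * π * M * (-(2 / r) / (2 * s))) / (8 * π * M * s) ^ 2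
    with ht'
  have ht'eq : t' = -(s ^ 2 - M / r) / (8 * π * M ^ 2 * s ^ 3) := by
    rw [ht']
    field_simp
    ring
  have ht'ne : t' ≠ 0 := by
    rw [ht'eq]
    have : (8 * π * M ^ 2 * s ^ 3) ≠ 0 := by positivity
    intro h
    rw [div_eq_zero_iff] at h
    rcases h with h | h
    · exact hv (by linarith)
    · exact this h
  have hTbh : Tbh M r = 1 / (8 * π * M * s) := by rw [Tbh, hs_def]
  have hC : Tbh M r * (8 * π * M) / t' =
      -8 * π * M ^ 2 * (1 - 2 * M / r) / (1 - 3 * M / r) := by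
    have hv' : (1 : ℝ) - 3 * M / r ≠ 0 := by
      intro h; apply h3; field_simp at h; linarith
    have h12 : (1 : ℝ) - 3 * M / r = s ^ 2 - M / r := by rw [hs2]; ring
    rw [div_eq_iff ht'ne, hTbh, ht'eq, ← hs2, h12]
    have hne1 : (8 * π * M * s : ℝ) ≠ 0 := by positivity
    have hB : (s ^ 2 - M / r) * (8 * π * M ^ 2 * s ^ 3) ≠ 0 :=
      mul_ne_zero hv (by positivity)
    rw [div_mul_div_comm,
      show (1 : ℝ) / (8 * π * M * s) * (8 * π * M) = (8 * π * M) / (8 * π * M * s) by ring,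
      div_eq_div_iff hne1 hB]
    ring
  refine ⟨t', hinv, ht'ne, hC, ?_, ?_⟩
  · intro hlt
    rw [hC]
    have hvneg : 1 - 3 * M / r < 0 := by
      have : 3 * M / r > 1 := (one_lt_div hr).mpr hlt
      linarith
    have hnum : 0 < 8 * π * M ^ 2 * (1 - 2 * M / r) := by positivity
    have : -8 * π * M ^ 2 * (1 - 2 * M / r) < 0 := by nlinarith
    exact div_pos_of_neg_of_neg this hvneg
  · intro hlt
    rw [hC]
    have hvpos : 0 < 1 - 3 * M / r := by
      have : 3 * M / r < 1 := (div_lt_one hr).mpr hlt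
      linarith
    have hnum : 0 < 8 * π * M ^ 2 * (1 - 2 * M / r) := by positivity
    have : -8 * π * M ^ 2 * (1 - 2 * M / r) < 0 := by nlinarith
    exact div_neg_of_neg_of_pos this hvpos
end

section
/- Let G : ℝ → ℝ → ℝ be any function defined for 0 < 2M < r satisfying: (i) for all M, r with 0 < 2M < r and for t' the derivative at M of m ↦ T(m,r), the function m ↦ G(m,r) has derivative −4πM²·t' at M (i.e. −∂G/∂T_BH = 4πM²); (ii) homogeneity G(λM,λr) = λ·G(M,r) for all λ > 0 and 0 < 2M < r; (iii) for every M > 0, G(M,r) + 4πM²·T(M,r) tends to M as r → ∞. Then G(M,r) = r·(1−√(1−2M/r)) − M/(2·√(1−2M/r)) for all 0 < 2M < r; that is, the Schwarzschild black-hole free energy is uniquely determined by these requirements. -/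
open Real Filter

noncomputable def Fs (M r : ℝ) : ℝ :=
  r * (1 - Real.sqrt (1 - 2 * M / r)) - M / (2 * Real.sqrt (1 - 2 * M / r))

lemma arg_pos {M r : ℝ} (hM : 0 < 2 * M) (hMr : 2 * M < r) : 0 < 1 - 2 * M / r := by
  have hr : 0 < r := lt_trans hM hMr
  rw [sub_pos, div_lt_one hr]; exact hMr

lemma sqrt_pos' {M r : ℝ} (hM : 0 < 2 * M) (hMr : 2 * M < r) :
    0 < Real.sqrt (1 - 2 * M / r) := Real.sqrt_pos.mpr (arg_pos hM hMr)

lemma hasDerivAt_s {M r : ℝ} (hM : 0 < 2 * M) (hMr : 2 * M < r) :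
    HasDerivAt (fun m => Real.sqrt (1 - 2 * m / r))
      (1 / (2 * Real.sqrt (1 - 2 * M / r)) * (-(2 * 1 / r))) M := by
  have hin : HasDerivAt (fun m : ℝ => 1 - 2 * m / r) (-(2 * 1 / r)) M := by
    have h0 : HasDerivAt (fun m : ℝ => 2 * m / r) (2 * 1 / r) M :=
      ((hasDerivAt_id M).const_mul 2).div_const r
    simpa using h0.const_sub 1
  have hne : (1 - 2 * M / r) ≠ 0 := ne_of_gt (arg_pos hM hMr)
  simpa [Function.comp_def] using (Real.hasDerivAt_sqrt hne).comp M hin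

lemma hasDerivAt_T {M r : ℝ} (hM : 0 < 2 * M) (hMr : 2 * M < r) :
    HasDerivAt (fun m => Tbh m r)
      (-((8 * π * 1) * Real.sqrt (1 - 2 * M / r)
          + (8 * π * M) * (1 / (2 * Real.sqrt (1 - 2 * M / r)) * (-(2 * 1 / r))))
        / (8 * π * M * Real.sqrt (1 - 2 * M / r)) ^ 2) M := by
  have hden : HasDerivAt (fun m => 8 * π * m * Real.sqrt (1 - 2 * m / r))
      ((8 * π * 1) * Real.sqrt (1 - 2 * M / r)
        + (8 * π * M) * (1 / (2 * Real.sqrt (1 - 2 * M / r)) * (-(2 * 1 / r)))) M := by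
    have hlin : HasDerivAt (fun m : ℝ => 8 * π * m) (8 * π * 1) M :=
      (hasDerivAt_id M).const_mul (8 * π)
    exact hlin.mul (hasDerivAt_s hM hMr)
  have hMpos : 0 < M := by linarith
  have hs := sqrt_pos' hM hMr
  have hne : 8 * π * M * Real.sqrt (1 - 2 * M / r) ≠ 0 := by positivity
  simpa [Tbh, one_div, Pi.inv_def] using hden.inv hne

lemma hasDerivAt_Fs {M r : ℝ} (hM : 0 < 2 * M) (hMr : 2 * M < r) :
    HasDerivAt (fun m => Fs m r)
      (-(4 * π * M ^ 2) *
        (-((8 * π * 1) * Real.sqrt (1 - 2 * M / r)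
          + (8 * π * M) * (1 / (2 * Real.sqrt (1 - 2 * M / r)) * (-(2 * 1 / r))))
        / (8 * π * M * Real.sqrt (1 - 2 * M / r)) ^ 2)) M := by
  have hr : 0 < r := lt_trans hM hMr
  have hMpos : 0 < M := by linarith
  have hs := sqrt_pos' hM hMr
  set s := Real.sqrt (1 - 2 * M / r) with hsdef
  have hds := hasDerivAt_s hM hMr
  have part1 : HasDerivAt (fun m => r * (1 - Real.sqrt (1 - 2 * m / r)))
      (r * (-(1 / (2 * s) * (-(2 * 1 / r))))) M := (hds.const_sub 1).const_mul r
  have hden2 : HasDerivAt (fun m => 2 * Real.sqrt (1 - 2 * m / r))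
      (2 * (1 / (2 * s) * (-(2 * 1 / r)))) M := hds.const_mul 2
  have hne2 : 2 * Real.sqrt (1 - 2 * M / r) ≠ 0 := by positivity
  have part2 : HasDerivAt (fun m => m / (2 * Real.sqrt (1 - 2 * m / r)))
      ((1 * (2 * s) - M * (2 * (1 / (2 * s) * (-(2 * 1 / r))))) / (2 * s) ^ 2) M := by
    simpa [Pi.div_def] using (hasDerivAt_id M).div hden2 hne2
  have whole := part1.sub part2
  have heq : r * (-(1 / (2 * s) * (-(2 * 1 / r))))
      - (1 * (2 * s) - M * (2 * (1 / (2 * s) * (-(2 * 1 / r))))) / (2 * s) ^ 2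
      = -(4 * π * M ^ 2) *
        (-((8 * π * 1) * s + (8 * π * M) * (1 / (2 * s) * (-(2 * 1 / r))))
        / (8 * π * M * s) ^ 2) := by
    have hpi : π ≠ 0 := Real.pi_ne_zero
    field_simp
    ring
  rw [heq] at whole
  exact whole

lemma const_diff (G : ℝ → ℝ → ℝ)
    (h1 : ∀ M r : ℝ, 0 < 2 * M → 2 * M < r → ∀ t' : ℝ,
      HasDerivAt (fun m => Tbh m r) t' M →
      HasDerivAt (fun m => G m r) (-(4 * π * M ^ 2) * t') M)
    {r a b : ℝ} (ha : 0 < 2 * a) (hb : 2 * b < r) (hab : a ≤ b) :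
    G b r - Fs b r = G a r - Fs a r := by
  have hzero : ∀ x ∈ Set.Icc a b, HasDerivAt (fun m => G m r - Fs m r) 0 x := by
    intro x hx
    have hx1 : 0 < 2 * x := by have := hx.1; linarith
    have hx2 : 2 * x < r := by have := hx.2; linarith
    have hG := h1 x r hx1 hx2 _ (hasDerivAt_T hx1 hx2)
    have := hG.sub (hasDerivAt_Fs hx1 hx2)
    simpa [Pi.sub_def] using this
  have hcont : ContinuousOn (fun m => G m r - Fs m r) (Set.Icc a b) :=
    fun x hx => ((hzero x hx).continuousAt).continuousWithinAt
  exact constant_of_has_deriv_right_zero hcont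
    (fun x hx => ((hzero x (Set.mem_Icc_of_Ico hx)).hasDerivWithinAt)) b
    (Set.right_mem_Icc.mpr hab)

lemma Fs_homog {l M r : ℝ} (hl : 0 < l) (hr : r ≠ 0) : Fs (l * M) (l * r) = l * Fs M r := by
  unfold Fs
  rw [show 2 * (l * M) / (l * r) = 2 * M / r by field_simp]
  ring

lemma Fs_add_T {M r : ℝ} (hM : 0 < 2 * M) (hMr : 2 * M < r) :
    Fs M r + 4 * π * M ^ 2 * Tbh M r = r * (1 - Real.sqrt (1 - 2 * M / r)) := by
  have hs := sqrt_pos' hM hMr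
  have hMpos : 0 < M := by linarith
  have hpi := Real.pi_ne_zero
  unfold Fs Tbh
  field_simp
  ring

lemma limit_lemma {M r : ℝ} (hM : 0 < 2 * M) (hMr : 2 * M < r) :
    Tendsto (fun l : ℝ => l * r * (1 - Real.sqrt (1 - 2 * M / (l * r)))) atTop (nhds M) := by
  have hr : 0 < r := lt_trans hM hMr
  have h0 : Tendsto (fun l : ℝ => 2 * M / (l * r)) atTop (nhds 0) := by
    have h : Tendsto (fun l : ℝ => (2 * M / r) * l⁻¹) atTop (nhds ((2 * M / r) * 0)) :=
      tendsto_inv_atTop_zero.const_mul _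
    rw [mul_zero] at h
    exact h.congr fun l => by rw [mul_comm l r, ← div_div, div_eq_mul_inv (2 * M / r) l]
  have hsq : Tendsto (fun l : ℝ => Real.sqrt (1 - 2 * M / (l * r))) atTop (nhds 1) := by
    have h1 : Tendsto (fun l : ℝ => 1 - 2 * M / (l * r)) atTop (nhds 1) := by
      simpa using tendsto_const_nhds.sub h0
    have := (Real.continuous_sqrt.tendsto 1).comp h1
    simpa [Function.comp_def] using this
  have hmain : Tendsto (fun l : ℝ => 2 * M / (1 + Real.sqrt (1 - 2 * M / (l * r))))
      atTop (nhds M) := by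
    have hden : Tendsto (fun l : ℝ => 1 + Real.sqrt (1 - 2 * M / (l * r))) atTop (nhds 2) := by
      have h := hsq.const_add 1
      norm_num at h
      exact h
    have h := (tendsto_const_nhds (x := 2 * M) (f := atTop (α := ℝ))).div hden
      (by norm_num : (2:ℝ) ≠ 0)
    have hMe : 2 * M / 2 = M := by ring
    rwa [hMe] at h
  refine hmain.congr' ?_
  filter_upwards [eventually_ge_atTop 1] with l hl
  have hl0 : 0 < l := by linarith
  have hlr : 0 < l * r := by positivity
  have harg : 0 ≤ 1 - 2 * M / (l * r) := by
    have : 2 * M / (l * r) ≤ 1 := by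
      rw [div_le_one hlr]
      exact le_of_lt (lt_of_lt_of_le hMr (le_mul_of_one_le_left hr.le hl))
    linarith
  set s := Real.sqrt (1 - 2 * M / (l * r)) with hsdef
  have hsq2 : s ^ 2 = 1 - 2 * M / (l * r) := Real.sq_sqrt harg
  have hspos : 0 ≤ s := Real.sqrt_nonneg _
  have h1s : (0:ℝ) < 1 + s := by linarith
  rw [eq_comm, eq_div_iff (ne_of_gt h1s)]
  have h2 : l * r * (1 - s ^ 2) = 2 * M := by
    rw [hsq2]; field_simp; ring
  linear_combination h2

/-- Uniqueness of the Schwarzschild free energy: any `G` with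
`−∂G/∂T_BH = 4πM²` at every wall radius, the scaling behavior of a
thermodynamic energy, and internal energy `G + 4πM²·T → M` as `r → ∞`,
must equal `r(1−√(1−2M/r)) − M/(2√(1−2M/r))`. -/
theorem free_energy_uniqueness (G : ℝ → ℝ → ℝ)
    (h1 : ∀ M r : ℝ, 0 < 2 * M → 2 * M < r → ∀ t' : ℝ,
      HasDerivAt (fun m => Tbh m r) t' M →
      HasDerivAt (fun m => G m r) (-(4 * π * M ^ 2) * t') M)
    (h2 : ∀ l : ℝ, 0 < l → ∀ M r : ℝ, 0 < 2 * M → 2 * M < r →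
      G (l * M) (l * r) = l * G M r)
    (h3 : ∀ M : ℝ, 0 < M →
      Tendsto (fun r => G M r + 4 * π * M ^ 2 * Tbh M r) atTop (nhds M)) :
    ∀ M r : ℝ, 0 < 2 * M → 2 * M < r →
      G M r = r * (1 - Real.sqrt (1 - 2 * M / r)) - M / (2 * Real.sqrt (1 - 2 * M / r)) := by
  intro M r hM hMr
  have hr : 0 < r := lt_trans hM hMr
  have hMpos : 0 < M := by linarith
  set c := G M r - Fs M r with hc
  have key : ∀ l : ℝ, 1 ≤ l →
      G M (l * r) + 4 * π * M ^ 2 * Tbh M (l * r)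
        = l * c + l * r * (1 - Real.sqrt (1 - 2 * M / (l * r))) := by
    intro l hl
    have hl0 : 0 < l := by linarith
    have hM' : 0 < 2 * (M / l) := by positivity
    have hMl : M / l ≤ M := div_le_self hMpos.le hl
    have hMr' : 2 * (M / l) < r := by linarith
    have e1 : G M (l * r) = l * G (M / l) r := by
      have := h2 l hl0 (M / l) r hM' hMr'
      rwa [mul_div_cancel₀ M (ne_of_gt hl0)] at this
    have e2 : c = G (M / l) r - Fs (M / l) r :=
      const_diff G h1 hM' hMr hMl
    have e3 : Fs M (l * r) = l * Fs (M / l) r := by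
      have := Fs_homog (M := M / l) hl0 (ne_of_gt hr)
      rwa [mul_div_cancel₀ M (ne_of_gt hl0)] at this
    have hMr2 : 2 * M < l * r := lt_of_lt_of_le hMr (le_mul_of_one_le_left hr.le hl)
    have e4 := Fs_add_T (M := M) (r := l * r) hM hMr2
    have : G M (l * r) = Fs M (l * r) + l * c := by
      rw [e1, e3, e2]; ring
    rw [this]
    linarith [e4]
  have t1 : Tendsto (fun l : ℝ => G M (l * r) + 4 * π * M ^ 2 * Tbh M (l * r))
      atTop (nhds M) := by
    have hcomp : Tendsto (fun l : ℝ => l * r) atTop atTop :=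
      Tendsto.atTop_mul_const hr tendsto_id
    exact (h3 M hMpos).comp hcomp
  have t2 := limit_lemma hM hMr
  have t3 : Tendsto (fun l : ℝ => l * c) atTop (nhds 0) := by
    have := t1.sub t2
    norm_num at this
    refine this.congr' ?_
    filter_upwards [eventually_ge_atTop 1] with l hl
    rw [key l hl]; ring
  have t4 : Tendsto (fun l : ℝ => l * c * l⁻¹) atTop (nhds 0) := by
    have := t3.mul tendsto_inv_atTop_zero
    simpa using this
  have t5 : Tendsto (fun l : ℝ => l * c * l⁻¹) atTop (nhds c) := by
    have : Tendsto (fun _ : ℝ => c) atTop (nhds c) := tendsto_const_nhds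
    refine this.congr' ?_
    filter_upwards [eventually_ge_atTop 1] with l hl
    have hl0 : l ≠ 0 := by positivity
    field_simp
  have hc0 : c = 0 := tendsto_nhds_unique t5 t4
  have : G M r = Fs M r := by
    have := hc ▸ hc0
    linarith [sub_eq_zero.mp (hc ▸ hc0)]
  simpa [Fs] using this
end

section
/- Let D ⊆ ℝ³ be measurable with 0 < vol(D) < ∞, let φ : ℝ³ × ℝ³ → ℝ be measurable and integrable on D × D, and suppose ∫_{D×D} φ < 0. Then for every β > 0 and every z > 0, the grand partition function diverges: the sum over N ∈ ℕ of ENNReal.ofReal(z^N / N!) times the lower Lebesgue integral of ENNReal.ofReal(exp(−β·Φ_N(x))) with respect to μ_N equals ∞ in ℝ≥0∞. Hence no thermal equilibrium state exists for a classical system whose two-particle interaction has negative total integral over the container. -/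
open MeasureTheory Real

lemma aux_smul_prod {α β : Type*} [MeasurableSpace α] [MeasurableSpace β]
    (μ : Measure α) (ν : Measure β) [SFinite μ] [SFinite ν] (c : ENNReal) :
    (c • μ).prod ν = c • (μ.prod ν) := by
  ext s hs
  rw [Measure.prod_apply hs, Measure.smul_apply, Measure.prod_apply hs,
    lintegral_smul_measure, smul_eq_mul]

lemma aux_map_pi {α : Type*} [MeasurableSpace α] (ν : Measure α) [IsFiniteMeasure ν]
    {N : ℕ} (i j : Fin N) (hij : i ≠ j) :
    (Measure.pi fun _ : Fin N => ν).map (fun x => (x i, x j)) =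
      (ν Set.univ) ^ (N - 2) • (ν.prod ν) := by
  classical
  have hT : Measurable fun x : Fin N → α => (x i, x j) :=
    (measurable_pi_apply i).prodMk (measurable_pi_apply j)
  haveI : IsFiniteMeasure ((ν Set.univ ^ (N - 2)) • ν) := by
    constructor
    simp only [Measure.smul_apply, smul_eq_mul]
    exact ENNReal.mul_lt_top (ENNReal.pow_lt_top (measure_lt_top _ _)) (measure_lt_top _ _)
  rw [← aux_smul_prod]
  refine (Measure.prod_eq fun s t hs ht => ?_).symm
  rw [Measure.map_apply hT (hs.prod ht)]
  have hpre : (fun x : Fin N → α => (x i, x j)) ⁻¹' (s ×ˢ t) =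
      Set.pi Set.univ (fun k => if k = i then s else if k = j then t else Set.univ) := by
    ext x
    simp only [Set.mem_preimage, Set.mem_prod, Set.mem_pi, Set.mem_univ, true_implies]
    constructor
    · rintro ⟨h1, h2⟩ k
      split_ifs with h h'
      · subst h; exact h1
      · subst h'; exact h2
      · trivial
    · intro h
      refine ⟨?_, ?_⟩
      · have := h i; simpa using this
      · have := h j; simpa [hij.symm] using this
  rw [hpre, Measure.pi_pi]
  rw [← Finset.mul_prod_erase Finset.univ _ (Finset.mem_univ i),
    ← Finset.mul_prod_erase _ _ (Finset.mem_erase.2 ⟨hij.symm, Finset.mem_univ j⟩)]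
  have h1 : (if i = i then s else if i = j then t else Set.univ) = s := by simp
  have h2 : (if j = i then s else if j = j then t else Set.univ) = t := by
    simp [hij.symm]
  rw [h1, h2]
  have h3 : ∀ k ∈ (Finset.univ.erase i).erase j,
      ν (if k = i then s else if k = j then t else Set.univ) = ν Set.univ := by
    intro k hk
    rw [Finset.mem_erase, Finset.mem_erase] at hk
    simp [hk.1, hk.2.1]
  rw [Finset.prod_congr rfl h3, Finset.prod_const]
  have hcard : ((Finset.univ.erase i).erase j).card = N - 2 := by
    rw [Finset.card_erase_of_mem (Finset.mem_erase.2 ⟨hij.symm, Finset.mem_univ j⟩),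
      Finset.card_erase_of_mem (Finset.mem_univ i)]
    simp [Nat.sub_sub]
  rw [hcard, Measure.smul_apply, smul_eq_mul]
  ring

lemma aux_card_pairs (N : ℕ) :
    (Finset.univ.filter (fun p : Fin N × Fin N => p.1 < p.2)).card = N.choose 2 := by
  classical
  rw [Finset.card_filter, Fintype.sum_prod_type, Finset.sum_comm]
  have h1 : ∀ j : Fin N, (∑ i : Fin N, if i < j then 1 else 0) = (j : ℕ) := by
    intro j
    rw [← Finset.card_filter]
    have : Finset.univ.filter (fun i : Fin N => i < j) = Finset.Iio j :=
      Finset.ext fun i => by simp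
    rw [this, Fin.card_Iio]
  rw [Finset.sum_congr rfl fun j _ => h1 j, Fin.sum_univ_eq_sum_range (fun k => k) N,
    Finset.sum_range_id, Nat.choose_two_right]

/-- Classical Dobrushin theorem: if the two-particle interaction `φ` has negative
total integral over the container `D × D`, then the grand partition function
`Ξ = ∑_N (z^N/N!) ∫_{D^N} e^{−βΦ_N}` diverges, so no thermal equilibrium state
exists. -/
theorem dobrushin_divergence
    (D : Set (EuclideanSpace ℝ (Fin 3))) (hD : MeasurableSet D)
    (hD0 : 0 < volume D) (hD1 : volume D < ⊤)
    (φ : EuclideanSpace ℝ (Fin 3) × EuclideanSpace ℝ (Fin 3) → ℝ)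
    (hφm : Measurable φ) (hφi : IntegrableOn φ (D ×ˢ D))
    (hneg : (∫ p in D ×ˢ D, φ p) < 0)
    (β z : ℝ) (hβ : 0 < β) (hz : 0 < z) :
    (∑' N : ℕ, ENNReal.ofReal (z ^ N / N.factorial) *
      ∫⁻ x, ENNReal.ofReal (Real.exp (-β *
          ∑ p ∈ Finset.univ.filter (fun p : Fin N × Fin N => p.1 < p.2), φ (x p.1, x p.2)))
        ∂(Measure.pi fun _ : Fin N => volume.restrict D)) = ⊤ := by
  classical
  set I : ℝ := ∫ p in D ×ˢ D, φ p with hIdef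
  set v : ℝ := (volume D).toReal with hvdef
  have hv0 : 0 < v := ENNReal.toReal_pos hD0.ne' hD1.ne
  set ν : Measure (EuclideanSpace ℝ (Fin 3)) := volume.restrict D with hνdef
  haveI hνfin : IsFiniteMeasure ν :=
    ⟨by rw [hνdef, Measure.restrict_apply_univ]; exact hD1⟩
  have hνuniv : ν Set.univ = volume D := by rw [hνdef, Measure.restrict_apply_univ]
  have hprodν : ν.prod ν = volume.restrict (D ×ˢ D) := by
    rw [hνdef, Measure.prod_restrict, ← Measure.volume_eq_prod]
  set K : ℝ := β * (-I) / v ^ 2 with hKdef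
  have hK0 : 0 < K :=
    div_pos (mul_pos hβ (neg_pos.mpr hneg)) (pow_pos hv0 2)
  set A : ℕ → ℝ :=
    fun N => z ^ N / N.factorial * (v ^ N * Real.exp (K * N.choose 2)) with hAdef
  -- Step 1: lower bound on each term, via Jensen's inequality
  have key : ∀ N : ℕ,
      ENNReal.ofReal (A N) ≤
        ENNReal.ofReal (z ^ N / N.factorial) *
          ∫⁻ x, ENNReal.ofReal (Real.exp (-β *
              ∑ p ∈ Finset.univ.filter (fun p : Fin N × Fin N => p.1 < p.2), φ (x p.1, x p.2)))
            ∂(Measure.pi fun _ : Fin N => ν) := by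
    intro N
    set μN : Measure (Fin N → EuclideanSpace ℝ (Fin 3)) :=
      Measure.pi fun _ : Fin N => ν with hμNdef
    set Φ : (Fin N → EuclideanSpace ℝ (Fin 3)) → ℝ :=
      fun x => ∑ p ∈ Finset.univ.filter (fun p : Fin N × Fin N => p.1 < p.2),
        φ (x p.1, x p.2) with hΦdef
    have hμuniv : μN Set.univ = (volume D) ^ N := by
      rw [hμNdef, Measure.pi_univ]
      simp [hνuniv]
    haveI : NeZero μN :=
      ⟨Measure.measure_univ_ne_zero.mp (by rw [hμuniv]; exact pow_ne_zero _ hD0.ne')⟩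
    have hμtoReal : (μN Set.univ).toReal = v ^ N := by
      rw [hμuniv, ENNReal.toReal_pow, ← hvdef]
    have hΦm : Measurable Φ := by
      rw [hΦdef]
      exact Finset.measurable_sum _ fun p _ =>
        hφm.comp ((measurable_pi_apply p.1).prodMk (measurable_pi_apply p.2))
    have hpair : ∀ p : Fin N × Fin N, p.1 ≠ p.2 →
        Integrable (fun x => φ (x p.1, x p.2)) μN ∧
          ∫ x, φ (x p.1, x p.2) ∂μN = v ^ (N - 2) * I := by
      rintro ⟨i, j⟩ hij
      have hT : Measurable fun x : Fin N → EuclideanSpace ℝ (Fin 3) => (x i, x j) :=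
        (measurable_pi_apply i).prodMk (measurable_pi_apply j)
      have hmap : μN.map (fun x => (x i, x j)) = (volume D) ^ (N - 2) • (ν.prod ν) := by
        rw [hμNdef, aux_map_pi ν i j hij, hνuniv]
      have hφprod : Integrable φ (ν.prod ν) := by rw [hprodν]; exact hφi
      have hφmap : Integrable φ (μN.map fun x => (x i, x j)) := by
        rw [hmap]; exact hφprod.smul_measure (ENNReal.pow_ne_top hD1.ne)
      refine ⟨(integrable_map_measure hφm.aestronglyMeasurable hT.aemeasurable).mp hφmap, ?_⟩
      calc ∫ x, φ (x i, x j) ∂μN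
          = ∫ y, φ y ∂(μN.map fun x => (x i, x j)) :=
            (integral_map hT.aemeasurable hφm.aestronglyMeasurable).symm
        _ = ((volume D) ^ (N - 2)).toReal • ∫ y, φ y ∂(ν.prod ν) := by
            rw [hmap, integral_smul_measure]
        _ = v ^ (N - 2) * I := by
            rw [hprodν, ENNReal.toReal_pow, ← hvdef, smul_eq_mul, ← hIdef]
    have hΦi : Integrable Φ μN := by
      rw [hΦdef]
      exact integrable_finset_sum _ fun p hp =>
        (hpair p (ne_of_lt (Finset.mem_filter.mp hp).2)).1
    have hΦint : ∫ x, Φ x ∂μN = (N.choose 2 : ℝ) * (v ^ (N - 2) * I) := by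
      rw [hΦdef]
      rw [integral_finset_sum _ fun p hp =>
        (hpair p (ne_of_lt (Finset.mem_filter.mp hp).2)).1]
      rw [Finset.sum_congr rfl fun p hp =>
        (hpair p (ne_of_lt (Finset.mem_filter.mp hp).2)).2,
        Finset.sum_const, aux_card_pairs, nsmul_eq_mul]
    have hexp_nn : ∀ᵐ x ∂μN, 0 ≤ Real.exp (-β * Φ x) :=
      Filter.Eventually.of_forall fun x => (Real.exp_pos _).le
    have hgoal : ENNReal.ofReal (A N) ≤ ENNReal.ofReal (z ^ N / N.factorial) *
        ∫⁻ x, ENNReal.ofReal (Real.exp (-β * Φ x)) ∂μN := by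
      by_cases hInt : Integrable (fun x => Real.exp (-β * Φ x)) μN
      · -- Jensen's inequality
        have hjensen : Real.exp (⨍ x, (-β * Φ x) ∂μN) ≤ ⨍ x, Real.exp (-β * Φ x) ∂μN := by
          refine convexOn_exp.map_average_le continuous_exp.continuousOn isClosed_univ
            (Filter.Eventually.of_forall fun x => Set.mem_univ _)
            (hΦi.const_mul (-β)) ?_
          exact hInt
        have havg : ⨍ x, (-β * Φ x) ∂μN
            = -β * ((N.choose 2 : ℝ) * (v ^ (N - 2) * I)) / v ^ N := by
          rw [average_eq, integral_const_mul, hΦint, measureReal_def, hμtoReal, smul_eq_mul]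
          ring
        have hKle : K * (N.choose 2 : ℝ) ≤ ⨍ x, (-β * Φ x) ∂μN := by
          rw [havg]
          rcases Nat.lt_or_ge N 2 with hN | hN
          · rw [Nat.choose_eq_zero_of_lt hN]
            simp
          · apply le_of_eq
            have hvpow : v ^ N = v ^ (N - 2) * v ^ 2 := by
              rw [← pow_add, Nat.sub_add_cancel hN]
            rw [hKdef, hvpow]
            have h2 : v ^ (N - 2) ≠ 0 := (pow_pos hv0 _).ne'
            have h3 : v ^ 2 ≠ 0 := (pow_pos hv0 _).ne'
            field_simp
        have hcore : v ^ N * Real.exp (K * (N.choose 2 : ℝ))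
            ≤ ∫ x, Real.exp (-β * Φ x) ∂μN := by
          have h1 : Real.exp (K * (N.choose 2 : ℝ)) ≤ ⨍ x, Real.exp (-β * Φ x) ∂μN :=
            le_trans (Real.exp_le_exp.mpr hKle) hjensen
          have h2 : ∫ x, Real.exp (-β * Φ x) ∂μN
              = v ^ N * ⨍ x, Real.exp (-β * Φ x) ∂μN := by
            rw [average_eq, measureReal_def, hμtoReal, smul_eq_mul, ← mul_assoc,
              mul_inv_cancel₀ (pow_pos hv0 N).ne', one_mul]
          rw [h2]
          exact mul_le_mul_of_nonneg_left h1 (pow_pos hv0 N).le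
        have hL : ∫⁻ x, ENNReal.ofReal (Real.exp (-β * Φ x)) ∂μN
            = ENNReal.ofReal (∫ x, Real.exp (-β * Φ x) ∂μN) :=
          (ofReal_integral_eq_lintegral_ofReal hInt hexp_nn).symm
        rw [hL, hAdef, ENNReal.ofReal_mul
          (div_nonneg (pow_nonneg hz.le N) (Nat.cast_nonneg _))]
        exact mul_le_mul_right (ENNReal.ofReal_le_ofReal hcore) _
      · have hLtop : ∫⁻ x, ENNReal.ofReal (Real.exp (-β * Φ x)) ∂μN = ⊤ := by
          by_contra hne
          apply hInt
          refine ⟨(Real.measurable_exp.comp (hΦm.const_mul (-β))).aestronglyMeasurable, ?_⟩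
          rw [hasFiniteIntegral_iff_ofReal hexp_nn]
          exact lt_top_iff_ne_top.mpr hne
        rw [hLtop, ENNReal.mul_top
          (ENNReal.ofReal_pos.mpr (div_pos (pow_pos hz N) (by exact_mod_cast N.factorial_pos))).ne']
        exact le_top
    simpa only [hΦdef] using hgoal
  -- Step 2: the lower bounds are unbounded
  have hdiv : ∀ r : ℝ, ∃ N : ℕ, r ≤ A N := by
    intro r
    set b : ℕ → ℝ := fun n => z * v * Real.exp (K * ((n : ℝ) - 1) / 2) / n with hbdef
    have hbto : Filter.Tendsto b Filter.atTop Filter.atTop := by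
      have h1 : Filter.Tendsto (fun x : ℝ => Real.exp x / x) Filter.atTop Filter.atTop := by
        simpa using Real.tendsto_exp_div_pow_atTop 1
      have h2 : Filter.Tendsto (fun n : ℕ => K * n / 2) Filter.atTop Filter.atTop :=
        (tendsto_natCast_atTop_atTop.const_mul_atTop hK0).atTop_div_const two_pos
      have h3 := h1.comp h2
      have h4 : Filter.Tendsto (fun n : ℕ => Real.exp (K * n / 2) / n)
          Filter.atTop Filter.atTop := by
        have h5 := h3.const_mul_atTop (show (0 : ℝ) < K / 2 by positivity)
        refine h5.congr' ?_
        filter_upwards [Filter.eventually_gt_atTop 0] with n hn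
        have hn' : (n : ℝ) ≠ 0 := Nat.cast_ne_zero.mpr hn.ne'
        simp only [Function.comp]
        field_simp
      have h6 := h4.const_mul_atTop
        (show (0 : ℝ) < z * v * Real.exp (-(K / 2)) from
          mul_pos (mul_pos hz hv0) (Real.exp_pos _))
      refine h6.congr fun n => ?_
      simp only [hbdef]
      rw [← mul_div_assoc]
      congr 1
      rw [mul_assoc, ← Real.exp_add]
      congr 2
      ring
    obtain ⟨N, hN⟩ :=
      ((hbto.eventually_ge_atTop (max r 1)).and (Filter.eventually_ge_atTop 1)).exists
    refine ⟨N, ?_⟩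
    have hN1 : 1 ≤ N := hN.2
    have hb1 : (1 : ℝ) ≤ b N := le_trans (le_max_right _ _) hN.1
    have hstep1 : b N ≤ b N ^ N := le_self_pow₀ hb1 (by omega)
    have hstep2 : b N ^ N ≤ A N := by
      have hb_eq : b N ^ N
          = (z * v * Real.exp (K * ((N : ℝ) - 1) / 2)) ^ N / (N : ℝ) ^ N := by
        simp only [hbdef]
        rw [div_pow]
      have hA_eq : A N
          = (z * v * Real.exp (K * ((N : ℝ) - 1) / 2)) ^ N / (N.factorial : ℝ) := by
        simp only [hAdef]
        rw [mul_pow, mul_pow, ← Real.exp_nat_mul, Nat.cast_choose_two]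
        have harg : (N : ℝ) * (K * (((N : ℝ) - 1)) / 2) = K * ((N : ℝ) * ((N : ℝ) - 1) / 2) := by
          ring
        rw [mul_div_assoc, harg]
        ring
      rw [hb_eq, hA_eq]
      gcongr
      · exact_mod_cast Nat.factorial_le_pow N
    calc r ≤ max r 1 := le_max_left _ _
      _ ≤ b N := hN.1
      _ ≤ b N ^ N := hstep1
      _ ≤ A N := hstep2
  -- Step 3: conclude
  refine ENNReal.eq_top_of_forall_nnreal_le fun r => ?_
  obtain ⟨N, hrA⟩ := hdiv (r : ℝ)
  calc (r : ENNReal) = ENNReal.ofReal (r : ℝ) := (ENNReal.ofReal_coe_nnreal).symm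
    _ ≤ ENNReal.ofReal (A N) := ENNReal.ofReal_le_ofReal hrA
    _ ≤ _ := (key N).trans (ENNReal.le_tsum N)
end

section
/- Let D ⊆ ℝ³ be measurable with 0 < vol(D) < ∞, write v := (vol D).toReal, and let φ : ℝ³ × ℝ³ → ℝ be measurable and integrable on D × D; set I := v⁻²·∫_{D×D} φ. Then for every β ∈ ℝ and every N ∈ ℕ, the lower Lebesgue integral of ENNReal.ofReal(exp(−β·Φ_N(x))) with respect to μ_N is at least ENNReal.ofReal( v^N · exp(−β·(N(N−1)/2)·I) ). (This is the Jensen/convexity lower bound on the configuration integral used in the proof of the Dobrushin theorem.) -/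
open MeasureTheory Real


lemma card_pairs (N : ℕ) :
    (((Finset.univ.filter (fun p : Fin N × Fin N => p.1 < p.2)).card : ℝ)) = N * (N - 1) / 2 := by
  have h1 : (Finset.univ.filter (fun p : Fin N × Fin N => p.1 < p.2)).card
      = (Finset.univ.filter (fun p : Fin N × Fin N => p.2 < p.1)).card := by
    apply Finset.card_bij (fun p _ => p.swap)
    · intro a ha; simp_all
    · intro a ha b hb h
      have := Prod.ext_iff.1 h
      exact Prod.ext this.2 this.1
    · intro b hb; exact ⟨b.swap, by simp_all, by simp⟩
  have h2 := Finset.card_filter_add_card_filter_not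
    (s := (Finset.univ : Finset (Fin N × Fin N))) (p := fun p => p.1 < p.2)
  have h3 : Finset.univ.filter (fun p : Fin N × Fin N => ¬ p.1 < p.2)
      = Finset.univ.filter (fun p : Fin N × Fin N => p.2 < p.1)
        ∪ Finset.univ.filter (fun p : Fin N × Fin N => p.1 = p.2) := by
    ext p
    simp only [Finset.mem_filter, Finset.mem_union, Finset.mem_univ, true_and, not_lt]
    constructor
    · intro h; rcases lt_or_eq_of_le h with h | h
      · exact Or.inl h
      · exact Or.inr h.symm
    · rintro (h | h)
      · exact h.le
      · exact h.ge
  have h4 : Finset.univ.filter (fun p : Fin N × Fin N => p.1 = p.2)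
      = (Finset.univ : Finset (Fin N)).diag := by
    ext p; simp [Finset.mem_diag, Prod.ext_iff, eq_comm]
  have h5 : Disjoint (Finset.univ.filter (fun p : Fin N × Fin N => p.2 < p.1))
      (Finset.univ.filter (fun p : Fin N × Fin N => p.1 = p.2)) := by
    simp only [Finset.disjoint_left, Finset.mem_filter]
    rintro p ⟨-, h⟩ ⟨-, h'⟩
    exact absurd h' h.ne'
  rw [h3, Finset.card_union_of_disjoint h5, h4, Finset.diag_card, ← h1] at h2
  simp only [Finset.card_univ, Fintype.card_prod, Fintype.card_fin] at h2
  set c := (Finset.univ.filter (fun p : Fin N × Fin N => p.1 < p.2)).card with hc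
  have : (c : ℝ) + (c + N) = N * N := by exact_mod_cast h2
  linarith

lemma pi_map_pair {α : Type*} [MeasurableSpace α] (P : Measure α) [IsProbabilityMeasure P]
    {N : ℕ} {i j : Fin N} (hij : i ≠ j) :
    Measure.map (fun x : Fin N → α => (x i, x j)) (Measure.pi fun _ => P) = P.prod P := by
  have hT : Measurable (fun x : Fin N → α => (x i, x j)) :=
    (measurable_pi_apply i).prodMk (measurable_pi_apply j)
  refine (Measure.prod_eq (fun s t hs ht => ?_)).symm
  rw [Measure.map_apply hT (hs.prod ht)]
  have hpre : (fun x : Fin N → α => (x i, x j)) ⁻¹' (s ×ˢ t)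
      = Set.pi Set.univ (fun k => if k = i then s else if k = j then t else Set.univ) := by
    ext x
    simp only [Set.mem_preimage, Set.mem_prod, Set.mem_pi, Set.mem_univ, true_implies]
    constructor
    · rintro ⟨h1, h2⟩ k
      by_cases hk : k = i
      · subst hk; simp [h1]
      · by_cases hk' : k = j
        · subst hk'; simp [hk, h2]
        · simp [hk, hk']
    · intro h
      refine ⟨by simpa using h i, ?_⟩
      have := h j
      simpa [Ne.symm hij] using this
  rw [hpre, Measure.pi_pi]
  have : ∀ k : Fin N, P (if k = i then s else if k = j then t else Set.univ)
      = (if k = i then P s else 1) * (if k = j then P t else 1) := by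
    intro k
    by_cases hk : k = i
    · subst hk; simp [hij]
    · by_cases hk' : k = j
      · subst hk'; simp [hk, Ne.symm hij]
      · simp [hk, hk']
  simp_rw [this]
  rw [Finset.prod_mul_distrib, Finset.prod_ite_eq' Finset.univ i (fun _ => P s),
    Finset.prod_ite_eq' Finset.univ j (fun _ => P t)]
  simp


/-- Jensen/convexity lower bound on the configuration integral: with
`v = vol(D)` and `I = v⁻²·∫_{D×D} φ`, one has
`∫_{D^N} e^{−βΦ_N} ≥ v^N · exp(−β·(N(N−1)/2)·I)`. -/
theorem configuration_integral_lower_bound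
    (D : Set (EuclideanSpace ℝ (Fin 3))) (hD : MeasurableSet D)
    (hD0 : 0 < volume D) (hD1 : volume D < ⊤)
    (φ : EuclideanSpace ℝ (Fin 3) × EuclideanSpace ℝ (Fin 3) → ℝ)
    (hφm : Measurable φ) (hφi : IntegrableOn φ (D ×ˢ D))
    (β : ℝ) (N : ℕ) :
    ENNReal.ofReal ((volume D).toReal ^ N *
        Real.exp (-β * (((N : ℝ) * ((N : ℝ) - 1)) / 2) *
          (((volume D).toReal ^ 2)⁻¹ * ∫ p in D ×ˢ D, φ p))) ≤
      ∫⁻ x, ENNReal.ofReal (Real.exp (-β *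
          ∑ p ∈ Finset.univ.filter (fun p : Fin N × Fin N => p.1 < p.2), φ (x p.1, x p.2)))
        ∂(Measure.pi fun _ : Fin N => volume.restrict D) := by
  classical
  have hDne : volume D ≠ 0 := hD0.ne'
  have hDtop : volume D ≠ ⊤ := hD1.ne
  set v : ℝ := (volume D).toReal with hv
  have hv0 : 0 < v := ENNReal.toReal_pos hDne hDtop
  set P : Measure (EuclideanSpace ℝ (Fin 3)) := (volume D)⁻¹ • volume.restrict D with hP
  haveI hPprob : IsProbabilityMeasure P := by
    constructor
    rw [hP, Measure.smul_apply, Measure.restrict_apply_univ, smul_eq_mul,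
      ENNReal.inv_mul_cancel hDne hDtop]
  set ν : Measure (Fin N → EuclideanSpace ℝ (Fin 3)) := Measure.pi (fun _ : Fin N => P) with hν
  haveI : IsProbabilityMeasure ν := Measure.pi.instIsProbabilityMeasure _
  set pairs := Finset.univ.filter (fun p : Fin N × Fin N => p.1 < p.2) with hpairs
  set Φ : (Fin N → EuclideanSpace ℝ (Fin 3)) → ℝ := fun x => ∑ p ∈ pairs, φ (x p.1, x p.2) with hΦ
  have hΦm : Measurable Φ := by
    apply Finset.measurable_sum
    intro p _
    exact hφm.comp ((measurable_pi_apply p.1).prodMk (measurable_pi_apply p.2))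
  -- the measure identity
  have hμν : (Measure.pi fun _ : Fin N => volume.restrict D) = (volume D) ^ N • ν := by
    refine Measure.pi_eq fun s hs => ?_
    rw [Measure.smul_apply, hν, Measure.pi_pi]
    have : ∀ i, P (s i) = (volume D)⁻¹ * (volume.restrict D) (s i) := fun i => rfl
    simp_rw [this]
    rw [Finset.prod_mul_distrib, Finset.prod_const, Finset.card_univ, Fintype.card_fin,
      smul_eq_mul, ← mul_assoc, ← mul_pow, ENNReal.mul_inv_cancel hDne hDtop,
      one_pow, one_mul]
  -- product of P with itself
  have hPP : P.prod P = ((volume D)⁻¹ * (volume D)⁻¹) •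
      ((volume : Measure (EuclideanSpace ℝ (Fin 3) × EuclideanSpace ℝ (Fin 3))).restrict (D ×ˢ D)) := by
    have hPs : ∀ u : Set (EuclideanSpace ℝ (Fin 3)), MeasurableSet u →
        P u = (volume D)⁻¹ * volume (u ∩ D) := by
      intro u hu
      rw [hP, Measure.smul_apply, Measure.restrict_apply hu, smul_eq_mul]
    refine Measure.prod_eq fun s t hs ht => ?_
    rw [Measure.smul_apply, Measure.restrict_apply (hs.prod ht), Set.prod_inter_prod,
      Measure.volume_eq_prod, Measure.prod_prod, hPs s hs, hPs t ht, smul_eq_mul]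
    ring
  have hcne : (volume D)⁻¹ * (volume D)⁻¹ ≠ ⊤ := by
    simp [ENNReal.mul_ne_top, ENNReal.inv_ne_top.2 hDne]
  have hφPP : Integrable φ (P.prod P) := by
    rw [hPP]
    exact hφi.smul_measure hcne
  -- each pair term
  have hterm : ∀ p ∈ pairs, Integrable (fun x : Fin N → EuclideanSpace ℝ (Fin 3) => φ (x p.1, x p.2)) ν := by
    intro p hp
    have hij : p.1 ≠ p.2 := ((Finset.mem_filter.1 hp).2).ne
    have hmap := pi_map_pair P hij
    have hT : Measurable (fun x : Fin N → EuclideanSpace ℝ (Fin 3) => (x p.1, x p.2)) :=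
      (measurable_pi_apply p.1).prodMk (measurable_pi_apply p.2)
    rw [← hν] at hmap
    have h := integrable_map_measure (μ := ν) (f := fun x => (x p.1, x p.2)) (g := φ)
      hφm.aestronglyMeasurable hT.aemeasurable
    rw [hmap] at h
    exact h.1 hφPP
  have hΦint : Integrable Φ ν := integrable_finset_sum _ hterm
  set I : ℝ := (v ^ 2)⁻¹ * ∫ p in D ×ˢ D, φ p with hI
  have hval : ∀ p ∈ pairs, ∫ x, φ (x p.1, x p.2) ∂ν = I := by
    intro p hp
    have hij : p.1 ≠ p.2 := ((Finset.mem_filter.1 hp).2).ne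
    have hmap := pi_map_pair P hij
    have hT : Measurable (fun x : Fin N → EuclideanSpace ℝ (Fin 3) => (x p.1, x p.2)) :=
      (measurable_pi_apply p.1).prodMk (measurable_pi_apply p.2)
    rw [← hν] at hmap
    have h1 : ∫ x, φ (x p.1, x p.2) ∂ν = ∫ y, φ y ∂(P.prod P) := by
      rw [← hmap, integral_map hT.aemeasurable hφm.aestronglyMeasurable]
    rw [h1, hPP, integral_smul_measure, ENNReal.toReal_mul, ENNReal.toReal_inv, ← hv,
      hI, sq, mul_inv, smul_eq_mul]
  have hΦval : ∫ x, Φ x ∂ν = ((N : ℝ) * ((N : ℝ) - 1)) / 2 * I := by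
    rw [hΦ]
    rw [integral_finset_sum _ hterm, Finset.sum_congr rfl hval, Finset.sum_const,
      nsmul_eq_mul, hpairs, card_pairs]
  -- reduce to the probability measure
  rw [hμν, lintegral_smul_measure]
  have hofv : ENNReal.ofReal (v ^ N) = (volume D) ^ N := by
    rw [← ENNReal.ofReal_toReal hDtop, ← hv, ENNReal.ofReal_pow hv0.le,
      ENNReal.ofReal_toReal hDtop]
  rw [ENNReal.ofReal_mul (pow_nonneg hv0.le _), hofv]
  refine mul_le_mul_right ?_ _
  -- now Jensen over ν
  set A : ℝ := -β * (((N : ℝ) * ((N : ℝ) - 1)) / 2) * I with hA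
  by_cases hfin : (∫⁻ x, ENNReal.ofReal (Real.exp (-β * Φ x)) ∂ν) = ⊤
  · rw [hfin]; exact le_top
  · have hem : Measurable fun x => Real.exp (-β * Φ x) :=
      (Real.measurable_exp.comp ((hΦm.const_mul (-β))))
    have hexpint : Integrable (fun x => Real.exp (-β * Φ x)) ν := by
      refine ⟨hem.aestronglyMeasurable, ?_⟩
      rw [HasFiniteIntegral]
      simp_rw [Real.enorm_eq_ofReal (Real.exp_nonneg _)]
      exact lt_top_iff_ne_top.2 hfin
    have hfint : Integrable (fun x => -β * Φ x) ν := hΦint.const_mul (-β)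
    have jensen := convexOn_exp.map_integral_le (μ := ν) (f := fun x => -β * Φ x)
      Real.continuousOn_exp isClosed_univ
      (Filter.Eventually.of_forall fun x => Set.mem_univ _) hfint hexpint
    have hIf : ∫ x, -β * Φ x ∂ν = A := by
      rw [integral_const_mul, hΦval, hA]; ring
    rw [hIf] at jensen
    calc ENNReal.ofReal (Real.exp A) ≤ ENNReal.ofReal (∫ x, Real.exp (-β * Φ x) ∂ν) :=
          ENNReal.ofReal_le_ofReal jensen
      _ = ∫⁻ x, ENNReal.ofReal (Real.exp (-β * Φ x)) ∂ν :=
          ofReal_integral_eq_lintegral_ofReal hexpint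
            (Filter.Eventually.of_forall fun x => Real.exp_nonneg _)
end

section
/- Let D ⊆ ℝ³ be measurable with 0 < vol(D) < ∞, write v := (vol D).toReal, and let φ : ℝ³ × ℝ³ → ℝ be measurable and integrable on D × D. Then for every natural number N ≥ 2, the function Φ_N is integrable with respect to μ_N and its integral satisfies ∫ Φ_N dμ_N = (N(N−1)/2) · v^{N−2} · ∫_{D×D} φ. -/
open MeasureTheory Real

/-- The average of the pairwise interaction over all configurations in the
container: `Φ_N` is integrable for `μ_N = (vol|_D)^{⊗N}` and
`∫ Φ_N dμ_N = (N(N−1)/2)·v^{N−2}·∫_{D×D} φ`. -/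
theorem pairwise_interaction_integral
    (D : Set (EuclideanSpace ℝ (Fin 3))) (hD : MeasurableSet D)
    (hD0 : 0 < volume D) (hD1 : volume D < ⊤)
    (φ : EuclideanSpace ℝ (Fin 3) × EuclideanSpace ℝ (Fin 3) → ℝ)
    (hφm : Measurable φ) (hφi : IntegrableOn φ (D ×ˢ D))
    (N : ℕ) (hN : 2 ≤ N) :
    Integrable
      (fun x : Fin N → EuclideanSpace ℝ (Fin 3) =>
        ∑ p ∈ Finset.univ.filter (fun p : Fin N × Fin N => p.1 < p.2), φ (x p.1, x p.2))
      (Measure.pi fun _ : Fin N => volume.restrict D) ∧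
    (∫ x, (∑ p ∈ Finset.univ.filter (fun p : Fin N × Fin N => p.1 < p.2), φ (x p.1, x p.2))
        ∂(Measure.pi fun _ : Fin N => volume.restrict D)) =
      (((N : ℝ) * ((N : ℝ) - 1)) / 2) * (volume D).toReal ^ (N - 2) *
        ∫ p in D ×ˢ D, φ p := by
  classical
  let E := EuclideanSpace ℝ (Fin 3)
  set ρ : Measure E := volume.restrict D with hρ
  haveI : IsFiniteMeasure ρ := ⟨by
    rw [hρ, Measure.restrict_apply_univ]; exact hD1⟩
  set μ : Measure (Fin N → E) := Measure.pi fun _ : Fin N => ρ with hμ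
  set c : ENNReal := (volume D) ^ (N - 2) with hc
  have hcne : c ≠ ⊤ := by
    rw [hc]; exact ENNReal.pow_ne_top hD1.ne
  have hρuniv : ρ Set.univ = volume D := by
    rw [hρ, Measure.restrict_apply_univ]
  -- ρ.prod ρ is the restriction of volume to D ×ˢ D
  have hρρ : ρ.prod ρ = (volume : Measure (E × E)).restrict (D ×ˢ D) := by
    rw [hρ, Measure.prod_restrict, ← Measure.volume_eq_prod]
  -- the key map lemma
  have hmap : ∀ i j : Fin N, i ≠ j →
      Measure.map (fun x : Fin N → E => (x i, x j)) μ = c • (ρ.prod ρ) := by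
    intro i j hij
    have hg : Measurable fun x : Fin N → E => (x i, x j) :=
      (measurable_pi_apply i).prodMk (measurable_pi_apply j)
    haveI : IsFiniteMeasure (c • ρ) := ⟨by
      simp only [Measure.smul_apply, smul_eq_mul]
      exact ENNReal.mul_lt_top hcne.lt_top (measure_lt_top ρ _)⟩
    have key : (c • ρ).prod ρ = Measure.map (fun x : Fin N → E => (x i, x j)) μ := by
      apply Measure.prod_eq
      intro s t hs ht
      rw [Measure.map_apply hg (hs.prod ht)]
      have hpre : (fun x : Fin N → E => (x i, x j)) ⁻¹' (s ×ˢ t) =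
          Set.pi Set.univ (fun k => if k = i then s else if k = j then t else Set.univ) := by
        ext x
        simp only [Set.mem_preimage, Set.mem_prod, Set.mem_pi, Set.mem_univ, true_implies]
        constructor
        · rintro ⟨h1, h2⟩ k
          by_cases hki : k = i
          · subst hki; simp [h1]
          · by_cases hkj : k = j
            · subst hkj; simp [hij.symm, h2]
            · simp [hki, hkj]
        · intro h
          refine ⟨?_, ?_⟩
          · have := h i; simpa using this
          · have := h j; simpa [hij.symm] using this
      rw [hpre, Measure.pi_pi]
      have hjmem : j ∈ (Finset.univ : Finset (Fin N)).erase i :=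
        Finset.mem_erase.2 ⟨hij.symm, Finset.mem_univ j⟩
      rw [← Finset.mul_prod_erase Finset.univ _ (Finset.mem_univ i),
        ← Finset.mul_prod_erase _ _ hjmem]
      have h1 : (if i = i then s else if i = j then t else Set.univ) = s := by simp
      have h2 : (if j = i then s else if j = j then t else Set.univ) = t := by
        simp [hij.symm]
      rw [h1, h2]
      have h3 : ∀ k ∈ ((Finset.univ : Finset (Fin N)).erase i).erase j,
          ρ (if k = i then s else if k = j then t else Set.univ) = volume D := by
        intro k hk
        rcases Finset.mem_erase.1 hk with ⟨hkj, hk'⟩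
        rcases Finset.mem_erase.1 hk' with ⟨hki, _⟩
        simp [hki, hkj, hρuniv]
      rw [Finset.prod_congr rfl h3, Finset.prod_const]
      have hcard : (((Finset.univ : Finset (Fin N)).erase i).erase j).card = N - 2 := by
        rw [Finset.card_erase_of_mem hjmem, Finset.card_erase_of_mem (Finset.mem_univ i),
          Finset.card_univ, Fintype.card_fin]
        omega
      rw [hcard, ← hc]
      simp only [Measure.smul_apply, smul_eq_mul]
      ring
    rw [← key]
    -- (c • ρ).prod ρ = c • (ρ.prod ρ)
    ext s hs
    rw [Measure.smul_apply, Measure.prod_apply hs, Measure.prod_apply hs,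
      MeasureTheory.lintegral_smul_measure]
  -- per-pair integrability and integral
  have hφsm : AEStronglyMeasurable φ (c • (ρ.prod ρ)) := hφm.aestronglyMeasurable
  have hφi' : Integrable φ (ρ.prod ρ) := by rw [hρρ]; exact hφi
  have key : ∀ i j : Fin N, i ≠ j →
      Integrable (fun x : Fin N → E => φ (x i, x j)) μ ∧
      ∫ x, φ (x i, x j) ∂μ = (volume D).toReal ^ (N - 2) * ∫ p in D ×ˢ D, φ p := by
    intro i j hij
    have hg : Measurable fun x : Fin N → E => (x i, x j) :=
      (measurable_pi_apply i).prodMk (measurable_pi_apply j)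
    have hint : Integrable φ (Measure.map (fun x : Fin N → E => (x i, x j)) μ) := by
      rw [hmap i j hij]
      exact hφi'.smul_measure hcne
    constructor
    · exact (integrable_map_measure hφm.aestronglyMeasurable hg.aemeasurable).1 hint
    · calc ∫ x, φ (x i, x j) ∂μ
          = ∫ y, φ y ∂(Measure.map (fun x : Fin N → E => (x i, x j)) μ) :=
            (integral_map (μ := μ) hg.aemeasurable hφm.aestronglyMeasurable).symm
        _ = ∫ y, φ y ∂(c • (ρ.prod ρ)) := by rw [hmap i j hij]
        _ = c.toReal • ∫ y, φ y ∂(ρ.prod ρ) := integral_smul_measure _ _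
        _ = (volume D).toReal ^ (N - 2) * ∫ p in D ×ˢ D, φ p := by
            rw [hρρ, hc, ENNReal.toReal_pow, smul_eq_mul]
  -- each summand integrable
  have hint : ∀ p ∈ Finset.univ.filter (fun p : Fin N × Fin N => p.1 < p.2),
      Integrable (fun x : Fin N → E => φ (x p.1, x p.2)) μ := by
    intro p hp
    exact (key p.1 p.2 (ne_of_lt (Finset.mem_filter.1 hp).2)).1
  have hintsum : Integrable
      (fun x : Fin N → E =>
        ∑ p ∈ Finset.univ.filter (fun p : Fin N × Fin N => p.1 < p.2), φ (x p.1, x p.2)) μ :=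
    integrable_finset_sum _ hint
  refine ⟨hintsum, ?_⟩
  rw [integral_finset_sum _ hint]
  have hval : ∀ p ∈ Finset.univ.filter (fun p : Fin N × Fin N => p.1 < p.2),
      ∫ x, φ (x p.1, x p.2) ∂μ = (volume D).toReal ^ (N - 2) * ∫ p in D ×ˢ D, φ p := by
    intro p hp
    exact (key p.1 p.2 (ne_of_lt (Finset.mem_filter.1 hp).2)).2
  rw [Finset.sum_congr rfl hval, Finset.sum_const]
  -- cardinality of the set of ordered pairs i < j
  have hcard2 : 2 * (Finset.univ.filter fun p : Fin N × Fin N => p.1 < p.2).card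
      = N * N - N := by
    have hswap : (Finset.univ.filter fun p : Fin N × Fin N => p.1 < p.2).card
        = (Finset.univ.filter fun p : Fin N × Fin N => p.2 < p.1).card := by
      apply Finset.card_bij (fun p _ => Prod.swap p)
      · intro p hp
        simp only [Finset.mem_filter, Finset.mem_univ, true_and] at hp ⊢
        exact hp
      · intro p hp q hq h
        exact Prod.swap_injective h
      · intro p hp
        simp only [Finset.mem_filter, Finset.mem_univ, true_and] at hp
        exact ⟨Prod.swap p, by simpa using hp, by simp⟩
    have hne : (Finset.univ.filter fun p : Fin N × Fin N => p.1 ≠ p.2).card = N * N - N := by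
      have : (Finset.univ.filter fun p : Fin N × Fin N => p.1 ≠ p.2)
          = (Finset.univ : Finset (Fin N)).offDiag := by
        ext p; simp
      rw [this, Finset.offDiag_card, Finset.card_univ, Fintype.card_fin]
    have hsplit : (Finset.univ.filter fun p : Fin N × Fin N => p.1 ≠ p.2)
        = (Finset.univ.filter fun p : Fin N × Fin N => p.1 < p.2)
          ∪ (Finset.univ.filter fun p : Fin N × Fin N => p.2 < p.1) := by
      rw [← Finset.filter_or]
      apply Finset.filter_congr
      intro p _
      exact ne_iff_lt_or_gt
    have hdisj : Disjoint (Finset.univ.filter fun p : Fin N × Fin N => p.1 < p.2)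
        (Finset.univ.filter fun p : Fin N × Fin N => p.2 < p.1) := by
      rw [Finset.disjoint_left]
      intro p hp hq
      simp only [Finset.mem_filter] at hp hq
      exact absurd hq.2 (not_lt.2 hp.2.le)
    have := hne
    rw [hsplit, Finset.card_union_of_disjoint hdisj, ← hswap] at this
    omega
  have hcardR : ((Finset.univ.filter fun p : Fin N × Fin N => p.1 < p.2).card : ℝ)
      = (N : ℝ) * ((N : ℝ) - 1) / 2 := by
    have hle : N ≤ N * N := Nat.le_mul_of_pos_left N (by omega)
    have : ((N * N - N : ℕ) : ℝ) = (N : ℝ) * (N : ℝ) - (N : ℝ) := by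
      rw [Nat.cast_sub hle]; push_cast; ring
    have h2 : ((2 * (Finset.univ.filter fun p : Fin N × Fin N => p.1 < p.2).card : ℕ) : ℝ)
        = (N : ℝ) * (N : ℝ) - (N : ℝ) := by rw [hcard2, this]
    push_cast at h2
    linarith
  rw [nsmul_eq_mul, hcardR]
  ring
end

section
/- Let ι be a type, ε : ι → ℝ, β > 0, μ, U ∈ ℝ, and N ∈ ℕ. Then, in ℝ≥0∞, the cardinality of the set of configurations γ : ι →₀ ℕ with ∑ᵢ γ(i) = N and ∑ᵢ ε(i)·γ(i) ≤ U (expressed as the tsum of 1 over this subtype) is at most ENNReal.ofReal( exp( β·(U − μ·N) ) ) multiplied by the tsum over all configurations γ : ι →₀ ℕ of ENNReal.ofReal( exp( −β·∑ᵢ (ε(i) − μ)·γ(i) ) ). -/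
open Real
open scoped ENNReal

/-- Chernoff-type bound: the number of occupation-number configurations with `N`
particles and energy at most `U` is bounded by `e^{β(U−μN)}` times the grand
partition function. -/
theorem number_of_states_le_grand_partition
    (ι : Type*) (ε : ι → ℝ) (β : ℝ) (hβ : 0 < β) (μ U : ℝ) (N : ℕ) :
    (∑' _ : {γ : ι →₀ ℕ //
        (γ.sum (fun _ n => (n : ℕ))) = N ∧ (γ.sum (fun i n => ε i * n)) ≤ U},
      (1 : ℝ≥0∞)) ≤
    ENNReal.ofReal (Real.exp (β * (U - μ * N))) *
      ∑' γ : ι →₀ ℕ,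
        ENNReal.ofReal (Real.exp (-β * γ.sum (fun i n => (ε i - μ) * n))) := by
  set f : (ι →₀ ℕ) → ℝ≥0∞ := fun γ =>
    ENNReal.ofReal (Real.exp (-β * γ.sum (fun i n => (ε i - μ) * n))) with hf
  set c : ℝ≥0∞ := ENNReal.ofReal (Real.exp (β * (U - μ * N))) with hc
  set S := {γ : ι →₀ ℕ //
      (γ.sum (fun _ n => (n : ℕ))) = N ∧ (γ.sum (fun i n => ε i * n)) ≤ U} with hS
  have key : ∀ γ : S, (1 : ℝ≥0∞) ≤ c * f γ := by
    rintro ⟨γ, hN, hU⟩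
    have hsplit : γ.sum (fun i n => (ε i - μ) * n)
        = γ.sum (fun i n => ε i * n) - μ * N := by
      rw [← hN]
      push_cast
      rw [Finsupp.mul_sum, ← Finsupp.sum_sub]
      exact Finsupp.sum_congr fun i _ => by ring
    have hle : (1 : ℝ) ≤ Real.exp (β * (U - μ * N)) *
        Real.exp (-β * γ.sum (fun i n => (ε i - μ) * n)) := by
      rw [← Real.exp_add, ← Real.exp_zero]
      apply Real.exp_le_exp.2
      rw [hsplit]
      nlinarith
    calc (1 : ℝ≥0∞) = ENNReal.ofReal 1 := by simp
      _ ≤ ENNReal.ofReal (Real.exp (β * (U - μ * N)) *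
          Real.exp (-β * γ.sum (fun i n => (ε i - μ) * n))) :=
        ENNReal.ofReal_le_ofReal hle
      _ = c * f γ := by
        rw [ENNReal.ofReal_mul (Real.exp_pos _).le]
  calc (∑' _ : S, (1 : ℝ≥0∞)) ≤ ∑' γ : S, c * f γ := ENNReal.tsum_le_tsum key
    _ = c * ∑' γ : S, f (γ : ι →₀ ℕ) := ENNReal.tsum_mul_left
    _ ≤ c * ∑' γ : ι →₀ ℕ, f γ := by
        gcongr
        calc (∑' γ : S, f (γ : ι →₀ ℕ))
            = ∑' γ : ι →₀ ℕ, Set.indicator {γ | (γ.sum (fun _ n => (n : ℕ))) = N ∧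
                (γ.sum (fun i n => ε i * n)) ≤ U} f γ := tsum_subtype _ f
          _ ≤ ∑' γ : ι →₀ ℕ, f γ :=
            ENNReal.tsum_le_tsum fun γ => Set.indicator_le_self _ _ _
end

section
/- Let Ω : ℝ → ℝ → ℝ with Ω(V,u) > 0 for all V and u, let ε ∈ ℝ, δ > 0, and let σ₋ < σ₊ be real numbers. Assume that, as V → ∞ along Filter.atTop on ℝ, (1/V)·log Ω(V, (ε−δ)·V) → σ₋ and (1/V)·log Ω(V, (ε+δ)·V) → σ₊. Then Ω(V, (ε−δ)·V) / Ω(V, (ε+δ)·V) → 0 as V → ∞, and consequently ( Ω(V, (ε+δ)·V) − Ω(V, (ε−δ)·V) ) / Ω(V, (ε+δ)·V) → 1 as V → ∞. -/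
open Real Filter

/-- At the thermodynamic limit, the microcanonical count
`W = Ω(U+δV) − Ω(U−δV)` becomes equal to `Ω(U+δV)`: the ratio
`Ω(U−δV)/Ω(U+δV)` tends to `0`, hence `W/Ω(U+δV)` tends to `1`. -/
theorem boltzmann_count_ratio (Ω : ℝ → ℝ → ℝ) (hΩ : ∀ V u, 0 < Ω V u)
    (ε δ : ℝ) (hδ : 0 < δ) (σm σp : ℝ) (hσ : σm < σp)
    (hm : Tendsto (fun V => (1 / V) * Real.log (Ω V ((ε - δ) * V))) atTop (nhds σm))
    (hp : Tendsto (fun V => (1 / V) * Real.log (Ω V ((ε + δ) * V))) atTop (nhds σp)) :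
    Tendsto (fun V => Ω V ((ε - δ) * V) / Ω V ((ε + δ) * V)) atTop (nhds 0) ∧
    Tendsto (fun V => (Ω V ((ε + δ) * V) - Ω V ((ε - δ) * V)) / Ω V ((ε + δ) * V))
      atTop (nhds 1) := by
  have hg : Tendsto
      (fun V => (1 / V) * Real.log (Ω V ((ε - δ) * V)) -
        (1 / V) * Real.log (Ω V ((ε + δ) * V))) atTop (nhds (σm - σp)) := hm.sub hp
  have hVg : Tendsto
      (fun V : ℝ => V * ((1 / V) * Real.log (Ω V ((ε - δ) * V)) -
        (1 / V) * Real.log (Ω V ((ε + δ) * V)))) atTop atBot :=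
    tendsto_id.atTop_mul_neg (by linarith) hg
  have hratio : Tendsto (fun V => Ω V ((ε - δ) * V) / Ω V ((ε + δ) * V)) atTop (nhds 0) := by
    have hexp := Real.tendsto_exp_atBot.comp hVg
    refine hexp.congr' ?_
    filter_upwards [eventually_gt_atTop (0 : ℝ)] with V hV
    have h1 : (0:ℝ) < Ω V ((ε - δ) * V) := hΩ _ _
    have h2 : (0:ℝ) < Ω V ((ε + δ) * V) := hΩ _ _
    have hVne : (V:ℝ) ≠ 0 := ne_of_gt hV
    simp only [Function.comp]
    rw [mul_sub, ← mul_assoc, ← mul_assoc, mul_one_div_cancel hVne, one_mul, one_mul,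
      ← Real.log_div h1.ne' h2.ne', Real.exp_log (div_pos h1 h2)]
  refine ⟨hratio, ?_⟩
  have : Tendsto (fun V => 1 - Ω V ((ε - δ) * V) / Ω V ((ε + δ) * V)) atTop (nhds (1 - 0)) :=
    tendsto_const_nhds.sub hratio
  rw [sub_zero] at this
  refine this.congr ?_
  intro V
  have h2 : (0:ℝ) < Ω V ((ε + δ) * V) := hΩ _ _
  rw [sub_div, div_self h2.ne']
end
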